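/- A 3×n binary matrix M has the consecutive ones property for rows if and only if it does not contain (as a submatrix, up to independent row and column permutations) the 3×3 matrix M_{I₁} = [[1,1,0],[0,1,1],[1,0,1]] nor the 3×4 matrix M_{III₁} = [[1,1,0,0],[0,1,1,0],[0,1,0,1]]. -/

import Mathlib

/-- The `true` entries of the row `v` occur consecutively. -/
def RowConsecutive {k : ℕ} (v : Fin k → Bool) : Prop :=
  ∃ a b : ℕ, ∀ j : Fin k, v j = true ↔ a ≤ (j : ℕ) ∧ (j : ℕ) ≤ b

/-- Consecutive ones property for rows. -/
def C1R {m k : ℕ} (M : Fin m → Fin k → Bool) : Prop :=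
  ∃ σ : Equiv.Perm (Fin k), ∀ i, RowConsecutive fun j => M i (σ j)

/-- `M` contains a configuration of `A` as a submatrix: some rows and columns of `M`
(in some order) form the matrix `A` up to row and column permutations. -/
def ContainsConfig {m n k l : ℕ} (M : Fin m → Fin n → Bool)
    (A : Fin k → Fin l → Bool) : Prop :=
  ∃ (r : Fin k ↪ Fin m) (c : Fin l ↪ Fin n), ∀ i j, M (r i) (c j) = A i j

/-- Tucker's forbidden matrix `M_{I₁}`. -/
def MI1 : Fin 3 → Fin 3 → Bool :=
  ![![true, true, false], ![false, true, true], ![true, false, true]]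

/-- Tucker's forbidden matrix `M_{III₁}`. -/
def MIII1 : Fin 3 → Fin 4 → Bool :=
  ![![true, true, false, false], ![false, true, true, false], ![false, true, false, true]]

/-!
A column order witnessing C1R for `M` also witnesses it for every configuration contained in `M`,
and a finite check shows that `M_{I₁}` and `M_{III₁}` are not C1R.

Conversely, for three rows only the set of column patterns matters. Avoiding `M_{I₁}` means that
one of the three two-element patterns is missing, and avoiding `M_{III₁}` that the full column or
one of the singleton columns is missing. A row permutation moves the missing pair to `{0, 2}`, and
then each of the four possibilities for the second missing pattern leaves patterns that can be
listed so that the ones of every row are consecutive.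
-/

open Function

lemma rowConsecutive_iff {k : ℕ} (v : Fin k → Bool) :
    RowConsecutive v ↔
      ∀ j₁ j₂ j₃ : Fin k, j₁ ≤ j₂ → j₂ ≤ j₃ → v j₁ = true → v j₃ = true → v j₂ = true := by
  constructor
  · rintro ⟨a, b, h⟩ j₁ j₂ j₃ h₁₂ h₂₃ h₁ h₃
    rw [h] at h₁ h₃ ⊢
    have : (j₁ : ℕ) ≤ j₂ ∧ (j₂ : ℕ) ≤ j₃ := ⟨h₁₂, h₂₃⟩
    omega
  · intro h
    by_cases hne : (Finset.univ.filter fun j => v j = true).Nonempty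
    · set T := Finset.univ.filter fun j => v j = true
      have hmem : ∀ j, j ∈ T ↔ v j = true := by simp [T]
      refine ⟨T.min' hne, T.max' hne, fun j => ⟨fun hj => ?_, fun ⟨ha, hb⟩ => ?_⟩⟩
      · exact ⟨T.min'_le j ((hmem j).2 hj), T.le_max' j ((hmem j).2 hj)⟩
      · exact h _ j _ (Fin.le_def.2 ha) (Fin.le_def.2 hb)
          ((hmem _).1 (T.min'_mem hne)) ((hmem _).1 (T.max'_mem hne))
    · exact ⟨1, 0, fun j => ⟨fun hj => (hne ⟨j, by simpa using hj⟩).elim, fun _ => by omega⟩⟩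

instance {k : ℕ} (v : Fin k → Bool) : Decidable (RowConsecutive v) :=
  decidable_of_iff _ (rowConsecutive_iff v).symm

instance {m k : ℕ} (M : Fin m → Fin k → Bool) : Decidable (C1R M) :=
  inferInstanceAs (Decidable (∃ σ : Equiv.Perm (Fin k), ∀ i, RowConsecutive fun j => M i (σ j)))

/-- Sorting the columns by `pos` makes every row consecutive. -/
lemma C1R_of_interval_positions {m n : ℕ} (M : Fin m → Fin n → Bool) (pos : Fin n → ℕ)
    (a b : Fin m → ℕ) (h : ∀ i j, M i j = true ↔ a i ≤ pos j ∧ pos j ≤ b i) : C1R M := by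
  refine ⟨Tuple.sort pos, fun i => (rowConsecutive_iff _).2 ?_⟩
  intro j₁ j₂ j₃ h₁₂ h₂₃ h₁ h₃
  have := Tuple.monotone_sort pos h₁₂
  have := Tuple.monotone_sort pos h₂₃
  simp only [comp_apply] at *
  rw [h] at h₁ h₃ ⊢
  omega

lemma C1R.of_containsConfig {m n k l : ℕ} {M : Fin m → Fin n → Bool} {A : Fin k → Fin l → Bool}
    (h : C1R M) (hc : ContainsConfig M A) : C1R A := by
  obtain ⟨r, c, hrc⟩ := hc
  obtain ⟨σ, hσ⟩ := h
  choose a b hab using hσ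
  refine C1R_of_interval_positions A (fun j => σ.symm (c j)) (a ∘ r) (b ∘ r) fun i j => ?_
  simpa [hrc] using hab (r i) (σ.symm (c j))

lemma C1R.comp_rows {m m' n : ℕ} {M : Fin m → Fin n → Bool} (h : C1R M) (f : Fin m' → Fin m) :
    C1R (M ∘ f) :=
  let ⟨σ, hσ⟩ := h
  ⟨σ, fun i => hσ (f i)⟩

lemma C1R.of_comp_perm {m n : ℕ} {M : Fin m → Fin n → Bool} (π : Equiv.Perm (Fin m))
    (h : C1R (M ∘ π)) : C1R M := by
  simpa [comp_assoc] using h.comp_rows π.symm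

lemma C1R_of_forall_mem_layout {m n : ℕ} (M : Fin m → Fin n → Bool) (L : List (Fin m → Bool))
    (hL : ∀ i, RowConsecutive fun k : Fin L.length => L[k] i) (hM : ∀ j, swap M j ∈ L) :
    C1R M := by
  choose a b hab using hL
  refine C1R_of_interval_positions M (fun j => L.idxOf (swap M j)) a b fun i j => ?_
  have hlt := List.idxOf_lt_length_of_mem (hM j)
  simpa [List.getElem_idxOf hlt] using hab i ⟨_, hlt⟩

lemma containsConfig_of_forall_mem_range_swap {m n l : ℕ} {M : Fin m → Fin n → Bool}
    {A : Fin m → Fin l → Bool} (hA : Injective (swap A)) (h : ∀ j, swap A j ∈ Set.range (swap M)) :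
    ContainsConfig M A := by
  choose c hc using h
  have hc_inj : Injective c := fun j j' hjj' => hA (by rw [← hc, ← hc, hjj'])
  exact ⟨Embedding.refl _, ⟨c, hc_inj⟩, fun i j => congrFun (hc j) i⟩

lemma comp_mem_range_swap_comp_iff {ι ι' κ α : Type*} (M : ι → κ → α) (π : ι' ≃ ι)
    (t : ι → α) : t ∘ π ∈ Set.range (swap (M ∘ π)) ↔ t ∈ Set.range (swap M) :=
  exists_congr fun k => π.surjective.right_cancellable (g₁ := swap M k) (g₂ := t)

lemma not_C1R_MI1 : ¬ C1R MI1 := by decide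

lemma not_C1R_MIII1 : ¬ C1R MIII1 := by decide

lemma injective_swap_MI1 : Injective (swap MI1) := by decide

lemma injective_swap_MIII1 : Injective (swap MIII1) := by decide

lemma exists_perm_swap_MI1_comp (j : Fin 3) :
    ∃ π : Equiv.Perm (Fin 3), swap MI1 j ∘ π = swap MI1 0 := by
  revert j; decide

lemma exists_swap_MIII1_comp_perm (π : Equiv.Perm (Fin 3)) (j : Fin 4) :
    ∃ j', swap MIII1 j ∘ π = swap MIII1 j' := by
  revert π j; decide

/-- Column `0` of `M_{I₁}` is the pattern `{0, 2}`; the columns of `M_{III₁}` are the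
patterns `{0}`, `{0, 1, 2}`, `{1}`, `{2}`. -/
lemma exists_layout (j : Fin 4) :
    ∃ L : List (Fin 3 → Bool), (∀ i, RowConsecutive fun k : Fin L.length => L[k] i) ∧
      ∀ t, t ∈ L ∨ t = swap MI1 0 ∨ t = swap MIII1 j := by
  fin_cases j
  · exact ⟨[![false, false, false], ![false, true, false], ![true, true, false],
      ![true, true, true], ![false, true, true], ![false, false, true]], by decide, by decide⟩
  · exact ⟨[![false, false, false], ![true, false, false], ![true, true, false],
      ![false, true, false], ![false, true, true], ![false, false, true]], by decide, by decide⟩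
  · exact ⟨[![false, false, false], ![true, false, false], ![true, true, false],
      ![true, true, true], ![false, true, true], ![false, false, true]], by decide, by decide⟩
  · exact ⟨[![false, false, false], ![true, false, false], ![true, true, false],
      ![true, true, true], ![false, true, true], ![false, true, false]], by decide, by decide⟩

lemma C1R_of_not_mem_range_swap {n : ℕ} {M : Fin 3 → Fin n → Bool} {j : Fin 4}
    (h₁ : swap MI1 0 ∉ Set.range (swap M)) (h₂ : swap MIII1 j ∉ Set.range (swap M)) : C1R M := by
  obtain ⟨L, hL, hcover⟩ := exists_layout j
  refine C1R_of_forall_mem_layout M L hL fun k => ?_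
  rcases hcover (swap M k) with hk | hk | hk
  · exact hk
  · exact (h₁ ⟨k, hk⟩).elim
  · exact (h₂ ⟨k, hk⟩).elim

/-- Tucker's theorem for matrices with 3 rows: a `3 × n` binary matrix is C1R iff it
contains no configuration of `M_{I₁}` and no configuration of `M_{III₁}`. -/
theorem stmt19 (n : ℕ) (M : Fin 3 → Fin n → Bool) :
    C1R M ↔ ¬ ContainsConfig M MI1 ∧ ¬ ContainsConfig M MIII1 := by
  refine ⟨fun h => ⟨fun hc => not_C1R_MI1 (h.of_containsConfig hc),
    fun hc => not_C1R_MIII1 (h.of_containsConfig hc)⟩, fun ⟨h₁, h₂⟩ => ?_⟩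
  obtain ⟨j₁, hj₁⟩ :=
    not_forall.1 (mt (containsConfig_of_forall_mem_range_swap injective_swap_MI1) h₁)
  obtain ⟨j₂, hj₂⟩ :=
    not_forall.1 (mt (containsConfig_of_forall_mem_range_swap injective_swap_MIII1) h₂)
  obtain ⟨π, hπ⟩ := exists_perm_swap_MI1_comp j₁
  obtain ⟨j₃, hj₃⟩ := exists_swap_MIII1_comp_perm π j₂
  refine C1R.of_comp_perm π (C1R_of_not_mem_range_swap (j := j₃) ?_ ?_)
  · rwa [← hπ, comp_mem_range_swap_comp_iff]
  · rwa [← hj₃, comp_mem_range_swap_comp_iff]
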